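/- arXiv:1703.07899 — 2 statements merged into one kernel-verified Lean document; each statement's English description precedes it below -/
import Mathlib

section
/- Pointwise injectivity of the principal symbol of the linearized thin-sandwich operator: Let E be a real inner product space, let P : E → E be a self-adjoint linear map that is definite in the sense that ⟨P v, v⟩ ≠ 0 for every v ≠ 0, and let c be a nonzero real number. Then for every nonzero ξ ∈ E, the only vector Y ∈ E satisfying (1/2)⟨ξ, Y⟩ ξ − (1/2)‖ξ‖² Y − c ⟨P ξ, Y⟩ P ξ = 0 is Y = 0. -/
open scoped RealInnerProductSpace

/-- Pointwise injectivity of the principal symbol of the linearized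
thin-sandwich operator. -/
theorem symbol_injective
    {E : Type*} [NormedAddCommGroup E] [InnerProductSpace ℝ E]
    (P : E →ₗ[ℝ] E)
    (hsa : ∀ x y : E, ⟪P x, y⟫ = ⟪x, P y⟫)
    (hdef : ∀ v : E, v ≠ 0 → ⟪P v, v⟫ ≠ 0)
    (c : ℝ) (hc : c ≠ 0)
    (ξ : E) (hξ : ξ ≠ 0) (Y : E)
    (h : ((1 : ℝ)/2 * ⟪ξ, Y⟫) • ξ - ((1 : ℝ)/2 * ‖ξ‖^2) • Y
        - (c * ⟪P ξ, Y⟫) • P ξ = 0) :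
    Y = 0 := by
  have hPξ : ⟪P ξ, ξ⟫ ≠ 0 := hdef ξ hξ
  have hnorm : (‖ξ‖ : ℝ) ^ 2 ≠ 0 := by
    have := norm_ne_zero_iff.mpr hξ
    positivity
  -- inner with ξ kills the first two terms
  have h1 : ⟪((1 : ℝ)/2 * ⟪ξ, Y⟫) • ξ - ((1 : ℝ)/2 * ‖ξ‖^2) • Y
      - (c * ⟪P ξ, Y⟫) • P ξ, ξ⟫ = 0 := by rw [h, inner_zero_left]
  rw [inner_sub_left, inner_sub_left, real_inner_smul_left, real_inner_smul_left,
    real_inner_smul_left] at h1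
  have hb : ⟪P ξ, Y⟫ = 0 := by
    have hself : ⟪ξ, ξ⟫ = (‖ξ‖ : ℝ) ^ 2 := real_inner_self_eq_norm_sq ξ
    have hsym : ⟪Y, ξ⟫ = ⟪ξ, Y⟫ := real_inner_comm ξ Y
    rw [hself, hsym] at h1
    have : c * ⟪P ξ, Y⟫ * ⟪P ξ, ξ⟫ = 0 := by linarith
    rcases mul_eq_zero.mp this with h' | h'
    · exact (mul_eq_zero.mp h').resolve_left hc
    · exact absurd h' hPξ
  rw [hb, mul_zero, zero_smul, sub_zero, sub_eq_zero] at h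
  -- so Y is a multiple of ξ
  have hY : Y = (⟪ξ, Y⟫ / ‖ξ‖^2) • ξ := by
    have h3 := congrArg (fun v => ((2 : ℝ) / ‖ξ‖^2) • v) h.symm
    simp only [smul_smul] at h3
    rw [show (2:ℝ)/‖ξ‖^2*(1/2*‖ξ‖^2) = 1 by field_simp, one_smul] at h3
    rw [show (2:ℝ)/‖ξ‖^2*(1/2*⟪ξ,Y⟫) = ⟪ξ,Y⟫/‖ξ‖^2 by ring] at h3
    exact h3
  have ha : ⟪ξ, Y⟫ = 0 := by
    have : ⟪P ξ, Y⟫ = (⟪ξ, Y⟫ / ‖ξ‖^2) * ⟪P ξ, ξ⟫ := by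
      conv_lhs => rw [hY]
      rw [real_inner_smul_right]
    rw [hb] at this
    rcases mul_eq_zero.mp this.symm with h' | h'
    · exact (div_eq_zero_iff.mp h').resolve_right hnorm
    · exact absurd h' hPξ
  rw [hY, ha, zero_div, zero_smul]
end

section
/- Let n ≥ 1 and let K, B be symmetric real n×n matrices such that d := (trace K)² − trace(K·K) > 0 (so in particular K ≠ 0 and trace(K·K) > 0). Set π := K − (trace K)·1 and I := trace(B·B) − (trace B)² + (trace(π·B))²/d. Then I ≥ 0, and I = 0 if and only if B = (trace(K·B)/trace(K·K))·K. -/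
/-!
Write `B = α K + W` with `α = tr(KB)/tr(K²)`, so that `W` is Frobenius-orthogonal to `K`.
Substituting, the `α`-dependence cancels and the integrand becomes
`tr(W²) + tr(K²) (tr W)² / d`, a sum of two nonnegative terms since `d > 0`.
It vanishes exactly when `W = 0`, i.e. when `B = α K`.
-/

open Matrix

namespace Matrix

variable {m : Type*} [Fintype m] {A K B W : Matrix m m ℝ}

theorem IsSymm.conjTranspose_mul_self (hA : A.IsSymm) : Aᴴ * A = A * A := by
  rw [conjTranspose_eq_transpose_of_trivial, hA.eq]

theorem IsSymm.trace_mul_self_nonneg (hA : A.IsSymm) : 0 ≤ (A * A).trace :=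
  hA.conjTranspose_mul_self ▸ (posSemidef_conjTranspose_mul_self A).trace_nonneg

theorem IsSymm.trace_mul_self_eq_zero_iff (hA : A.IsSymm) : (A * A).trace = 0 ↔ A = 0 :=
  hA.conjTranspose_mul_self ▸ trace_conjTranspose_mul_self_eq_zero_iff

theorem IsSymm.trace_mul_self_pos_of_lt_trace_sq (hA : A.IsSymm)
    (h : (A * A).trace < A.trace ^ 2) : 0 < (A * A).trace := by
  refine hA.trace_mul_self_nonneg.lt_of_ne fun h0 => ?_
  rw [eq_comm, hA.trace_mul_self_eq_zero_iff] at h0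
  simp [h0] at h

theorem trace_mul_sub_projection_eq_zero (hK : (K * K).trace ≠ 0) :
    (K * (B - ((K * B).trace / (K * K).trace) • K)).trace = 0 := by
  rw [mul_sub, trace_sub, Matrix.mul_smul, trace_smul, smul_eq_mul, div_mul_cancel₀ _ hK,
    sub_self]

theorem trace_mul_self_smul_add_of_orthogonal (α : ℝ) (hKW : (K * W).trace = 0) :
    ((α • K + W) * (α • K + W)).trace = α ^ 2 * (K * K).trace + (W * W).trace := by
  have hWK : (W * K).trace = 0 := trace_mul_comm W K ▸ hKW
  simp only [add_mul, mul_add, trace_add, smul_mul_assoc, Matrix.mul_smul, trace_smul, smul_eq_mul,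
    hKW, hWK]
  ring

end Matrix

/-- The integrand under `B = α K + W` with `tr(KW) = 0`, written in the scalars
`t = tr K`, `k = tr(K²)`, `u = tr W`, `w = tr(W²)`. -/
theorem thin_sandwich_integrand_scalar_identity {α t k u w : ℝ} (hd : t ^ 2 - k ≠ 0) :
    (α ^ 2 * k + w) - (α * t + u) ^ 2 + (α * k - t * (α * t + u)) ^ 2 / (t ^ 2 - k)
      = w + k * u ^ 2 / (t ^ 2 - k) := by
  field_simp
  ring

theorem thin_sandwich_integrand_nonneg_general
    {n : ℕ} (K B : Matrix (Fin n) (Fin n) ℝ)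
    (hK : K.IsSymm) (hB : B.IsSymm)
    (hd : 0 < K.trace ^ 2 - (K * K).trace) :
    0 ≤ (B * B).trace - B.trace ^ 2
        + (((K - K.trace • (1 : Matrix (Fin n) (Fin n) ℝ)) * B).trace) ^ 2
          / (K.trace ^ 2 - (K * K).trace)
    ∧ ((B * B).trace - B.trace ^ 2
        + (((K - K.trace • (1 : Matrix (Fin n) (Fin n) ℝ)) * B).trace) ^ 2
          / (K.trace ^ 2 - (K * K).trace) = 0
        ↔ B = ((K * B).trace / (K * K).trace) • K) := by
  have hk : 0 < (K * K).trace := hK.trace_mul_self_pos_of_lt_trace_sq (by linarith)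
  set α := (K * B).trace / (K * K).trace
  set W := B - α • K with hW
  have hWsymm : W.IsSymm := hB.sub (hK.smul α)
  have hBW : B = α • K + W := by rw [hW, add_sub_cancel]
  have hKB : (K * B).trace = α * (K * K).trace := (div_mul_cancel₀ _ hk.ne').symm
  have hI : (B * B).trace - B.trace ^ 2
        + (((K - K.trace • (1 : Matrix (Fin n) (Fin n) ℝ)) * B).trace) ^ 2
          / (K.trace ^ 2 - (K * K).trace)
      = (W * W).trace + (K * K).trace * W.trace ^ 2 / (K.trace ^ 2 - (K * K).trace) := by
    rw [sub_mul, trace_sub, smul_mul_assoc, one_mul, trace_smul, smul_eq_mul, hKB, hBW,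
      trace_mul_self_smul_add_of_orthogonal α (trace_mul_sub_projection_eq_zero hk.ne'),
      trace_add, trace_smul, smul_eq_mul]
    exact thin_sandwich_integrand_scalar_identity hd.ne'
  have hw := hWsymm.trace_mul_self_nonneg
  have hu : 0 ≤ (K * K).trace * W.trace ^ 2 / (K.trace ^ 2 - (K * K).trace) := by positivity
  refine ⟨hI ▸ add_nonneg hw hu, ?_⟩
  rw [hI, add_eq_zero_iff_of_nonneg hw hu, hWsymm.trace_mul_self_eq_zero_iff]
  refine ⟨fun h => sub_eq_zero.mp h.1, fun h => ?_⟩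
  have hW0 : W = 0 := sub_eq_zero.mpr h
  simp [hW0]

/-- Pointwise nonnegativity of the thin-sandwich integrand and
characterization of its vanishing. -/
theorem thin_sandwich_integrand_nonneg
    {n : ℕ} (hn : 1 ≤ n) (K B : Matrix (Fin n) (Fin n) ℝ)
    (hK : K.IsSymm) (hB : B.IsSymm)
    (hd : 0 < K.trace ^ 2 - (K * K).trace) :
    0 ≤ (B * B).trace - B.trace ^ 2
        + (((K - K.trace • (1 : Matrix (Fin n) (Fin n) ℝ)) * B).trace) ^ 2
          / (K.trace ^ 2 - (K * K).trace)
    ∧ ((B * B).trace - B.trace ^ 2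
        + (((K - K.trace • (1 : Matrix (Fin n) (Fin n) ℝ)) * B).trace) ^ 2
          / (K.trace ^ 2 - (K * K).trace) = 0
        ↔ B = ((K * B).trace / (K * K).trace) • K) :=
  thin_sandwich_integrand_nonneg_general K B hK hB hd
end
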